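/- Fix vertices u ≠ v. Let A_{u,v} = {(cost(p), bottleneck(p)) : p a walk from u to v with at least one edge} and let B_{u,v} = {(cost(p), bottleneck(p)) : p a path from u to v with at least one edge} (walks with no repeated vertices). Then the Pareto frontiers coincide: P(A_{u,v}) = P(B_{u,v}). In particular every useful (d, f) pair is realized by a simple path of cost exactly d and bottleneck exactly f. -/

import Mathlib

open SimpleGraph

/-- The cost of a walk: the sum of the edge costs over its edges. -/
def walkCost {V : Type*} (cost : Sym2 V → ℕ) {G : SimpleGraph V}
    {u v : V} (p : G.Walk u v) : ℕ :=
  (p.edges.map cost).sum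

/-- The bottleneck of a walk (with at least one edge): the minimum capacity
over its edges. -/
noncomputable def bottleneck {V : Type*} (cap : Sym2 V → ℝ) {G : SimpleGraph V}
    {u v : V} (p : G.Walk u v) : ℝ :=
  ((p.edges.map cap).min?).getD 0

/-- The Pareto frontier of a set of (distance, flow) pairs: the pairs that are
not dominated by any other pair of the set, where `(d', f')` dominates `(d, f)`
if `(d', f') ≠ (d, f)`, `d' ≤ d` and `f' ≥ f`. -/
def Pareto (A : Set (ℕ × ℝ)) : Set (ℕ × ℝ) :=
  {x | x ∈ A ∧ ¬ ∃ y ∈ A, y ≠ x ∧ y.1 ≤ x.1 ∧ x.2 ≤ y.2}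

/-!
Shortcutting a walk to a path (`Walk.bypass`) keeps a sublist of its edges, so the cost cannot
increase and the bottleneck, a minimum over fewer edges, cannot decrease. Hence every walk pair
is weakly dominated by a path pair; a set all of whose elements are weakly dominated by
elements of a subset has the same Pareto frontier as that subset.
-/

theorem Pareto_eq_of_subset_of_forall_exists_le {A B : Set (ℕ × ℝ)} (hBA : B ⊆ A)
    (hdom : ∀ a ∈ A, ∃ b ∈ B, b.1 ≤ a.1 ∧ a.2 ≤ b.2) : Pareto A = Pareto B := by
  ext x
  constructor
  · rintro ⟨hxA, hx⟩
    obtain ⟨b, hbB, hb₁, hb₂⟩ := hdom x hxA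
    obtain rfl : b = x := by_contra fun hbx ↦ hx ⟨b, hBA hbB, hbx, hb₁, hb₂⟩
    exact ⟨hbB, fun ⟨y, hyB, hy⟩ ↦ hx ⟨y, hBA hyB, hy⟩⟩
  · rintro ⟨hxB, hx⟩
    refine ⟨hBA hxB, fun ⟨y, hyA, hyx, hy₁, hy₂⟩ ↦ ?_⟩
    obtain ⟨b, hbB, hb₁, hb₂⟩ := hdom y hyA
    obtain rfl | hbx := eq_or_ne b x
    · exact hyx (Prod.ext (le_antisymm hy₁ hb₁) (le_antisymm hb₂ hy₂))
    · exact hx ⟨b, hbB, hbx, hb₁.trans hy₁, hy₂.trans hb₂⟩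

theorem List.min?_getD_le_min?_getD_of_subset {α : Type*} [LinearOrder α] {l₁ l₂ : List α}
    (d : α) (h₁ : l₁ ≠ []) (h : l₁ ⊆ l₂) : l₂.min?.getD d ≤ l₁.min?.getD d := by
  obtain ⟨a, ha⟩ := Option.ne_none_iff_exists'.mp (mt List.min?_eq_none_iff.mp h₁)
  obtain ⟨c, hc⟩ := Option.ne_none_iff_exists'.mp
    (mt List.min?_eq_none_iff.mp (List.ne_nil_of_mem (h (List.min?_mem ha))))
  rw [ha, hc]
  exact (List.min?_eq_some_iff.mp hc).2 a (h (List.min?_mem ha))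

section Walk

variable {V : Type*} {G : SimpleGraph V} {u v u' v' : V}

theorem walkCost_le_of_edges_sublist (cost : Sym2 V → ℕ) {p : G.Walk u v} {q : G.Walk u' v'}
    (h : q.edges.Sublist p.edges) : walkCost cost q ≤ walkCost cost p :=
  (h.map cost).sum_le_sum fun _ _ ↦ Nat.zero_le _

theorem bottleneck_le_of_edges_subset (cap : Sym2 V → ℝ) {p : G.Walk u v} {q : G.Walk u' v'}
    (hq : q.edges ≠ []) (h : q.edges ⊆ p.edges) : bottleneck cap p ≤ bottleneck cap q :=
  List.min?_getD_le_min?_getD_of_subset 0 (by simpa using hq) (List.map_subset cap h)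

variable [DecidableEq V]

theorem walkCost_bypass_le (cost : Sym2 V → ℕ) (p : G.Walk u v) :
    walkCost cost p.bypass ≤ walkCost cost p :=
  walkCost_le_of_edges_sublist cost p.edges_bypass_sublist_edges

theorem bottleneck_le_bottleneck_bypass (cap : Sym2 V → ℝ) (huv : u ≠ v) (p : G.Walk u v) :
    bottleneck cap p ≤ bottleneck cap p.bypass :=
  bottleneck_le_of_edges_subset cap (Walk.edges_eq_nil.not.mpr (Walk.not_nil_of_ne huv))
    p.edges_bypass_subset_edges

end Walk

theorem Pareto_walks_eq_Pareto_paths_general {V : Type*} (G : SimpleGraph V)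
    (cost : Sym2 V → ℕ) (cap : Sym2 V → ℝ) {u v : V} (huv : u ≠ v) :
    Pareto {x : ℕ × ℝ | ∃ p : G.Walk u v, p.edges ≠ [] ∧
        x = (walkCost cost p, bottleneck cap p)} =
    Pareto {x : ℕ × ℝ | ∃ p : G.Walk u v, p.IsPath ∧ p.edges ≠ [] ∧
        x = (walkCost cost p, bottleneck cap p)} := by
  classical
  refine Pareto_eq_of_subset_of_forall_exists_le (fun x ⟨p, _, hp, hx⟩ ↦ ⟨p, hp, hx⟩) ?_
  rintro _ ⟨p, -, rfl⟩
  exact ⟨_, ⟨p.bypass, p.bypass_isPath,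
      Walk.edges_eq_nil.not.mpr (Walk.not_nil_of_ne huv), rfl⟩,
    walkCost_bypass_le cost p, bottleneck_le_bottleneck_bypass cap huv p⟩

/-- For `u ≠ v`, the Pareto frontier of the (cost, bottleneck) pairs of walks
from `u` to `v` coincides with that of the simple paths from `u` to `v`; every
useful pair is realized by a simple path. -/
theorem Pareto_walks_eq_Pareto_paths {V : Type*} [Fintype V] (G : SimpleGraph V)
    (cost : Sym2 V → ℕ) (cap : Sym2 V → ℝ) {u v : V} (huv : u ≠ v) :
    Pareto {x : ℕ × ℝ | ∃ p : G.Walk u v, p.edges ≠ [] ∧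
        x = (walkCost cost p, bottleneck cap p)} =
    Pareto {x : ℕ × ℝ | ∃ p : G.Walk u v, p.IsPath ∧ p.edges ≠ [] ∧
        x = (walkCost cost p, bottleneck cap p)} :=
  Pareto_walks_eq_Pareto_paths_general G cost cap huv
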